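/- arXiv:1701.06872 — 5 statements merged into one kernel-verified Lean document; each statement's English description precedes it below -/
import Mathlib

section
/- Let m ≥ 1 be a real number and λ a real number. Then the weights and standard locations of Hong's two-point estimation scheme satisfy w₁·ξ₁⁴ + w₂·ξ₂⁴ = λ² + m; in particular, the fourth standardized moment implied by the scheme grows linearly with the number m of random variables. -/
/-- For `m ≥ 1` and skewness parameter `λ`, Hong's two-point estimation scheme
satisfies `w₁·ξ₁⁴ + w₂·ξ₂⁴ = λ² + m`. -/
theorem tpe_fourth_moment (m lam : ℝ) (hm : 1 ≤ m)
    (ξ₁ ξ₂ w₁ w₂ : ℝ)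
    (hξ₁ : ξ₁ = lam / 2 + Real.sqrt (m + (lam / 2) ^ 2))
    (hξ₂ : ξ₂ = lam / 2 - Real.sqrt (m + (lam / 2) ^ 2))
    (hw₁ : w₁ = -(1 / m) * ξ₂ / (ξ₁ - ξ₂))
    (hw₂ : w₂ = (1 / m) * ξ₁ / (ξ₁ - ξ₂)) :
    w₁ * ξ₁ ^ 4 + w₂ * ξ₂ ^ 4 = lam ^ 2 + m := by
  have hm0 : (0:ℝ) < m := by linarith
  set s := Real.sqrt (m + (lam / 2) ^ 2) with hs
  have hnn : (0:ℝ) ≤ m + (lam / 2) ^ 2 := by positivity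
  have hs2 : s ^ 2 = m + (lam / 2) ^ 2 := Real.sq_sqrt hnn
  have hspos : 0 < s := Real.sqrt_pos.mpr (by positivity)
  have hdiff : ξ₁ - ξ₂ = 2 * s := by rw [hξ₁, hξ₂]; ring
  subst hw₁ hw₂ hξ₁ hξ₂
  rw [hdiff]
  field_simp
  linear_combination (64 * s ^ 3 + (48 * lam ^ 2 + 64 * m) * s) * hs2
end

section
/- Let m ≥ 1 and λ be real numbers, μ ∈ ℝ, σ > 0, and let g(x) = c₀ + c₁x + c₂x² + c₃x³ be a real cubic polynomial. With locations P_k = μ + ξ_k·σ for k = 1,2, the per-variable weighted sum of Hong's two-point estimation scheme satisfies w₁·g(P₁) + w₂·g(P₂) = (1/m)·g(μ) + c₂·σ² + c₃·(3μσ² + λσ³). Equivalently, writing the Taylor form, w₁·g(P₁) + w₂·g(P₂) = (1/m)·g(μ) + (g''(μ)/2)·σ² + (g'''(μ)/6)·λ·σ³. -/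
/-!
The locations `ξ₁, ξ₂` are the roots of `x² - λx - m`, so `ξ₁ + ξ₂ = λ` and `ξ₁ξ₂ = -m`, and the
weights are chosen so that the two-point rule reproduces the moments `1/m, 0, 1, λ` of orders
`0, …, 3`. Expanding the cubic `g` around `μ` up to order three then gives the identity.
-/

open Polynomial

theorem iteratedDeriv_polynomial_eval {𝕜 : Type*} [NontriviallyNormedField 𝕜] (p : 𝕜[X])
    (n : ℕ) :
    iteratedDeriv n (fun x => p.eval x) = fun x => (derivative^[n] p).eval x := by
  induction n generalizing p with
  | zero => simp
  | succ n ih =>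
    rw [iteratedDeriv_succ', Function.iterate_succ_apply, ← ih]
    exact congrArg _ (funext fun _ => p.deriv)

section Cubic

variable (a b c d x : ℝ)

theorem cubic_eq_eval :
    (fun y => a + b * y + c * y ^ 2 + d * y ^ 3) =
      fun y => (C a + C b * X + C c * X ^ 2 + C d * X ^ 3).eval y := by
  funext y; simp

theorem iteratedDeriv_two_cubic :
    iteratedDeriv 2 (fun y => a + b * y + c * y ^ 2 + d * y ^ 3) x = 2 * c + 6 * d * x := by
  rw [cubic_eq_eval, iteratedDeriv_polynomial_eval]
  simp [derivative_mul]; ring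

theorem iteratedDeriv_three_cubic :
    iteratedDeriv 3 (fun y => a + b * y + c * y ^ 2 + d * y ^ 3) x = 6 * d := by
  rw [cubic_eq_eval, iteratedDeriv_polynomial_eval]
  simp [derivative_mul]; ring

end Cubic

theorem two_point_cubic_eq_moments (c₀ c₁ c₂ c₃ : ℝ) (g : ℝ → ℝ)
    (hg : ∀ x, g x = c₀ + c₁ * x + c₂ * x ^ 2 + c₃ * x ^ 3) (μ σ w₁ w₂ ξ₁ ξ₂ : ℝ) :
    w₁ * g (μ + ξ₁ * σ) + w₂ * g (μ + ξ₂ * σ) =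
      (w₁ + w₂) * g μ + (w₁ * ξ₁ + w₂ * ξ₂) * σ * (c₁ + 2 * c₂ * μ + 3 * c₃ * μ ^ 2) +
        (w₁ * ξ₁ ^ 2 + w₂ * ξ₂ ^ 2) * σ ^ 2 * (c₂ + 3 * c₃ * μ) +
        (w₁ * ξ₁ ^ 3 + w₂ * ξ₂ ^ 3) * σ ^ 3 * c₃ := by
  simp only [hg]
  ring

section Locations

variable {m lam : ℝ}

theorem hong_locations_add :
    (lam / 2 + √(m + (lam / 2) ^ 2)) + (lam / 2 - √(m + (lam / 2) ^ 2)) = lam := by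
  ring

theorem hong_locations_mul (h : 0 ≤ m + (lam / 2) ^ 2) :
    (lam / 2 + √(m + (lam / 2) ^ 2)) * (lam / 2 - √(m + (lam / 2) ^ 2)) = -m := by
  linear_combination -Real.sq_sqrt h

theorem hong_locations_sub_pos (h : 0 < m + (lam / 2) ^ 2) :
    0 < (lam / 2 + √(m + (lam / 2) ^ 2)) - (lam / 2 - √(m + (lam / 2) ^ 2)) := by
  have := Real.sqrt_pos.mpr h
  linarith

end Locations

section Weights

variable {m ξ₁ ξ₂ : ℝ}

theorem hong_weights_moment_zero (hne : ξ₁ ≠ ξ₂) :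
    -(1 / m) * ξ₂ / (ξ₁ - ξ₂) + (1 / m) * ξ₁ / (ξ₁ - ξ₂) = 1 / m := by
  field_simp [sub_ne_zero.mpr hne]
  ring

theorem hong_weights_moment_one :
    -(1 / m) * ξ₂ / (ξ₁ - ξ₂) * ξ₁ + (1 / m) * ξ₁ / (ξ₁ - ξ₂) * ξ₂ = 0 := by
  ring

theorem hong_weights_moment_two (hne : ξ₁ ≠ ξ₂) (hm : m ≠ 0) (hmul : ξ₁ * ξ₂ = -m) :
    -(1 / m) * ξ₂ / (ξ₁ - ξ₂) * ξ₁ ^ 2 + (1 / m) * ξ₁ / (ξ₁ - ξ₂) * ξ₂ ^ 2 = 1 := by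
  field_simp [sub_ne_zero.mpr hne]
  linear_combination (ξ₂ - ξ₁) * hmul

theorem hong_weights_moment_three (hne : ξ₁ ≠ ξ₂) (hm : m ≠ 0) (hmul : ξ₁ * ξ₂ = -m) :
    -(1 / m) * ξ₂ / (ξ₁ - ξ₂) * ξ₁ ^ 3 + (1 / m) * ξ₁ / (ξ₁ - ξ₂) * ξ₂ ^ 3 = ξ₁ + ξ₂ := by
  field_simp [sub_ne_zero.mpr hne]
  linear_combination (ξ₂ ^ 2 - ξ₁ ^ 2) * hmul

end Weights

theorem tpe_cubic_quadrature_general (m lam : ℝ) (hm : 1 ≤ m)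
    (μ σ : ℝ)
    (c₀ c₁ c₂ c₃ : ℝ) (g : ℝ → ℝ)
    (hg : ∀ x, g x = c₀ + c₁ * x + c₂ * x ^ 2 + c₃ * x ^ 3)
    (ξ₁ ξ₂ w₁ w₂ P₁ P₂ : ℝ)
    (hξ₁ : ξ₁ = lam / 2 + Real.sqrt (m + (lam / 2) ^ 2))
    (hξ₂ : ξ₂ = lam / 2 - Real.sqrt (m + (lam / 2) ^ 2))
    (hw₁ : w₁ = -(1 / m) * ξ₂ / (ξ₁ - ξ₂))
    (hw₂ : w₂ = (1 / m) * ξ₁ / (ξ₁ - ξ₂))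
    (hP₁ : P₁ = μ + ξ₁ * σ) (hP₂ : P₂ = μ + ξ₂ * σ) :
    w₁ * g P₁ + w₂ * g P₂ =
        (1 / m) * g μ + c₂ * σ ^ 2 + c₃ * (3 * μ * σ ^ 2 + lam * σ ^ 3) ∧
      w₁ * g P₁ + w₂ * g P₂ =
        (1 / m) * g μ + (iteratedDeriv 2 g μ / 2) * σ ^ 2 +
          (iteratedDeriv 3 g μ / 6) * lam * σ ^ 3 := by
  subst hw₁ hw₂ hP₁ hP₂
  have hpos : 0 < m + (lam / 2) ^ 2 := by linarith [sq_nonneg (lam / 2)]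
  have hm0 : m ≠ 0 := (zero_lt_one.trans_le hm).ne'
  have hadd : ξ₁ + ξ₂ = lam := hξ₁ ▸ hξ₂ ▸ hong_locations_add
  have hmul : ξ₁ * ξ₂ = -m := hξ₁ ▸ hξ₂ ▸ hong_locations_mul hpos.le
  have hne : ξ₁ ≠ ξ₂ := (sub_pos.mp (hξ₁ ▸ hξ₂ ▸ hong_locations_sub_pos hpos)).ne'
  have hquad := two_point_cubic_eq_moments c₀ c₁ c₂ c₃ g hg μ σ
    (-(1 / m) * ξ₂ / (ξ₁ - ξ₂)) ((1 / m) * ξ₁ / (ξ₁ - ξ₂)) ξ₁ ξ₂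
  rw [hong_weights_moment_zero hne, hong_weights_moment_one, hong_weights_moment_two hne hm0 hmul,
    hong_weights_moment_three hne hm0 hmul, hadd] at hquad
  rw [hquad, show g = _ from funext hg, iteratedDeriv_two_cubic, iteratedDeriv_three_cubic]
  constructor <;> ring

/-- For `m ≥ 1`, skewness parameter `λ`, mean `μ`, standard deviation `σ > 0`,
and a cubic polynomial `g(x) = c₀ + c₁x + c₂x² + c₃x³`, the per-variable weighted
sum of Hong's two-point estimation scheme satisfies
`w₁·g(P₁) + w₂·g(P₂) = (1/m)·g(μ) + c₂·σ² + c₃·(3μσ² + λσ³)`; equivalently in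
Taylor form, `w₁·g(P₁) + w₂·g(P₂) = (1/m)·g(μ) + (g''(μ)/2)·σ² + (g'''(μ)/6)·λ·σ³`. -/
theorem tpe_cubic_quadrature (m lam : ℝ) (hm : 1 ≤ m)
    (μ σ : ℝ) (hσ : 0 < σ)
    (c₀ c₁ c₂ c₃ : ℝ) (g : ℝ → ℝ)
    (hg : ∀ x, g x = c₀ + c₁ * x + c₂ * x ^ 2 + c₃ * x ^ 3)
    (ξ₁ ξ₂ w₁ w₂ P₁ P₂ : ℝ)
    (hξ₁ : ξ₁ = lam / 2 + Real.sqrt (m + (lam / 2) ^ 2))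
    (hξ₂ : ξ₂ = lam / 2 - Real.sqrt (m + (lam / 2) ^ 2))
    (hw₁ : w₁ = -(1 / m) * ξ₂ / (ξ₁ - ξ₂))
    (hw₂ : w₂ = (1 / m) * ξ₁ / (ξ₁ - ξ₂))
    (hP₁ : P₁ = μ + ξ₁ * σ) (hP₂ : P₂ = μ + ξ₂ * σ) :
    w₁ * g P₁ + w₂ * g P₂ =
        (1 / m) * g μ + c₂ * σ ^ 2 + c₃ * (3 * μ * σ ^ 2 + lam * σ ^ 3) ∧
      w₁ * g P₁ + w₂ * g P₂ =
        (1 / m) * g μ + (iteratedDeriv 2 g μ / 2) * σ ^ 2 +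
          (iteratedDeriv 3 g μ / 6) * lam * σ ^ 3 :=
  tpe_cubic_quadrature_general m lam hm μ σ c₀ c₁ c₂ c₃ g hg ξ₁ ξ₂ w₁ w₂ P₁ P₂ hξ₁ hξ₂ hw₁ hw₂ hP₁
    hP₂
end

section
/- Let (Ω, ℙ) be a probability space and X₁,…,X_m : Ω → ℝ (m ≥ 1) integrable random variables with means μₗ = E[Xₗ], standard deviations σₗ > 0 with E[(Xₗ − μₗ)²] = σₗ², and let λₗ be the skewness parameter of Xₗ. Let Z : ℝ^m → ℝ be affine, Z(x) = b + Σₗ aₗ·xₗ. Then the two-point estimate of the mean, Σ_{l=1}^{m} Σ_{k=1}^{2} w_{l,k} · Z(μ₁, …, μ_{l−1}, P_{l,k}, μ_{l+1}, …, μ_m), equals the exact expectation E[Z(X₁,…,X_m)] = b + Σₗ aₗ·μₗ. -/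
/-!
Each variable contributes the pair `w₁ Z(…, μₗ + ξ₁σₗ, …) + w₂ Z(…, μₗ + ξ₂σₗ, …)`. Along the `l`-th
coordinate an affine `Z` is affine in `ξ`, and Hong's weights satisfy `w₁ + w₂ = 1/m` and
`w₁ξ₁ + w₂ξ₂ = 0`, so the pair equals `Z(μ)/m`. Summing over the `m` variables gives `Z(μ)`,
which is also `E[Z(X)]` by linearity of the integral.
-/

open MeasureTheory

theorem Finset.sum_mul_update {ι R : Type*} [Fintype ι] [DecidableEq ι] [CommRing R]
    (a x : ι → R) (l : ι) (t : R) :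
    ∑ j, a j * Function.update x l t j = ∑ j, a j * x j + a l * (t - x l) := by
  have hterm : ∀ j, a j * Function.update x l t j
      = a j * x j + if j = l then a l * (t - x l) else 0 := by
    intro j
    rcases eq_or_ne j l with rfl | hj
    · rw [Function.update_self, if_pos rfl]; ring
    · rw [Function.update_of_ne hj, if_neg hj, add_zero]
  simp only [hterm, Finset.sum_add_distrib, Finset.sum_ite_eq', Finset.mem_univ, if_true]

section TwoPointWeights

variable {K : Type*} [Field K]

theorem two_point_weights_add (c x y : K) (hxy : x ≠ y) :
    -c * y / (x - y) + c * x / (x - y) = c := by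
  field_simp [sub_ne_zero.mpr hxy]
  ring

theorem two_point_weights_first_moment (c x y : K) :
    -c * y / (x - y) * x + c * x / (x - y) * y = 0 := by
  ring

end TwoPointWeights

theorem hong_locations_ne {m : ℝ} (hm : 0 < m) (lam : ℝ) :
    lam / 2 + Real.sqrt (m + (lam / 2) ^ 2) ≠ lam / 2 - Real.sqrt (m + (lam / 2) ^ 2) := by
  have : 0 < Real.sqrt (m + (lam / 2) ^ 2) := Real.sqrt_pos.mpr (by positivity)
  linarith

theorem integral_const_add_sum_mul {Ω ι : Type*} [MeasurableSpace Ω] [Fintype ι]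
    (P : Measure Ω) [IsProbabilityMeasure P] (X : ι → Ω → ℝ) (hX : ∀ l, Integrable (X l) P)
    (b : ℝ) (a : ι → ℝ) :
    ∫ ω, b + ∑ l, a l * X l ω ∂P = b + ∑ l, a l * ∫ ω, X l ω ∂P := by
  have hterm : ∀ l ∈ Finset.univ, Integrable (fun ω => a l * X l ω) P :=
    fun l _ => (hX l).const_mul (a l)
  rw [integral_add (integrable_const b) (integrable_finsetSum _ hterm),
    integral_finsetSum _ hterm]
  simp [integral_const_mul]

theorem tpe_mean_exact_for_affine_general
    {Ω : Type*} [MeasurableSpace Ω] (P : Measure Ω) [IsProbabilityMeasure P]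
    (m : ℕ) (hm : 1 ≤ m) (X : Fin m → Ω → ℝ) (μ σ lam : Fin m → ℝ)
    (hint : ∀ l, Integrable (X l) P)
    (hmean : ∀ l, ∫ ω, X l ω ∂P = μ l)
    (ξ w Pt : Fin m → Fin 2 → ℝ)
    (hξ₁ : ∀ l, ξ l 0 = lam l / 2 + Real.sqrt ((m : ℝ) + (lam l / 2) ^ 2))
    (hξ₂ : ∀ l, ξ l 1 = lam l / 2 - Real.sqrt ((m : ℝ) + (lam l / 2) ^ 2))
    (hw₁ : ∀ l, w l 0 = -(1 / (m : ℝ)) * ξ l 1 / (ξ l 0 - ξ l 1))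
    (hw₂ : ∀ l, w l 1 = (1 / (m : ℝ)) * ξ l 0 / (ξ l 0 - ξ l 1))
    (hPt : ∀ l k, Pt l k = μ l + ξ l k * σ l)
    (Z : (Fin m → ℝ) → ℝ) (b : ℝ) (a : Fin m → ℝ)
    (hZ : ∀ x, Z x = b + ∑ l, a l * x l) :
    (∑ l, ∑ k, w l k * Z (Function.update μ l (Pt l k))) =
        ∫ ω, Z (fun l => X l ω) ∂P ∧
      (∫ ω, Z (fun l => X l ω) ∂P) = b + ∑ l, a l * μ l := by
  have hm₀ : (m : ℝ) ≠ 0 := by positivity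
  have hexact : ∫ ω, Z (fun l => X l ω) ∂P = b + ∑ l, a l * μ l := by
    simp only [hZ, integral_const_add_sum_mul P X hint, hmean]
  have hpair : ∀ l, ∑ k, w l k * Z (Function.update μ l (Pt l k)) = 1 / (m : ℝ) * Z μ := by
    intro l
    have hξ : ξ l 0 ≠ ξ l 1 := by
      rw [hξ₁, hξ₂]; exact hong_locations_ne (by positivity) (lam l)
    have hsum : w l 0 + w l 1 = 1 / (m : ℝ) := by
      rw [hw₁, hw₂]; exact two_point_weights_add _ _ _ hξ
    have hfirst : w l 0 * ξ l 0 + w l 1 * ξ l 1 = 0 := by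
      rw [hw₁, hw₂]; exact two_point_weights_first_moment _ _ _
    simp only [Fin.sum_univ_two, hZ, Finset.sum_mul_update, hPt]
    linear_combination (b + ∑ j, a j * μ j) * hsum + a l * σ l * hfirst
  refine ⟨?_, hexact⟩
  rw [hexact, Finset.sum_congr rfl fun l _ => hpair l, Finset.sum_const, Finset.card_univ,
    Fintype.card_fin, nsmul_eq_mul, hZ]
  field_simp

/-- Hong's two-point estimate of the mean of an affine function
`Z(x) = b + Σₗ aₗ·xₗ` of `m ≥ 1` integrable random variables equals the exact
expectation `E[Z(X₁,…,X_m)] = b + Σₗ aₗ·μₗ`. -/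
theorem tpe_mean_exact_for_affine
    {Ω : Type*} [MeasurableSpace Ω] (P : Measure Ω) [IsProbabilityMeasure P]
    (m : ℕ) (hm : 1 ≤ m) (X : Fin m → Ω → ℝ) (μ σ lam : Fin m → ℝ)
    (hint : ∀ l, Integrable (X l) P)
    (hmean : ∀ l, ∫ ω, X l ω ∂P = μ l)
    (hσ : ∀ l, 0 < σ l)
    (hvar : ∀ l, ∫ ω, (X l ω - μ l) ^ 2 ∂P = (σ l) ^ 2)
    (hskew : ∀ l, ∫ ω, ((X l ω - μ l) / σ l) ^ 3 ∂P = lam l)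
    (ξ w Pt : Fin m → Fin 2 → ℝ)
    (hξ₁ : ∀ l, ξ l 0 = lam l / 2 + Real.sqrt ((m : ℝ) + (lam l / 2) ^ 2))
    (hξ₂ : ∀ l, ξ l 1 = lam l / 2 - Real.sqrt ((m : ℝ) + (lam l / 2) ^ 2))
    (hw₁ : ∀ l, w l 0 = -(1 / (m : ℝ)) * ξ l 1 / (ξ l 0 - ξ l 1))
    (hw₂ : ∀ l, w l 1 = (1 / (m : ℝ)) * ξ l 0 / (ξ l 0 - ξ l 1))
    (hPt : ∀ l k, Pt l k = μ l + ξ l k * σ l)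
    (Z : (Fin m → ℝ) → ℝ) (b : ℝ) (a : Fin m → ℝ)
    (hZ : ∀ x, Z x = b + ∑ l, a l * x l) :
    (∑ l, ∑ k, w l k * Z (Function.update μ l (Pt l k))) =
        ∫ ω, Z (fun l => X l ω) ∂P ∧
      (∫ ω, Z (fun l => X l ω) ∂P) = b + ∑ l, a l * μ l :=
  tpe_mean_exact_for_affine_general P m hm X μ σ lam hint hmean ξ w Pt hξ₁ hξ₂ hw₁ hw₂ hPt Z b a hZ
end

section
/- Let (Ω, ℙ) be a probability space and X₁,…,X_m : Ω → ℝ (m ≥ 1) random variables such that for each l the moments E[Xₗ] = μₗ, E[(Xₗ − μₗ)²] = σₗ² with σₗ > 0, and E[((Xₗ − μₗ)/σₗ)³] = λₗ exist (with Xₗ³ integrable). Let Z(x) = Σ_{l=1}^{m} gₗ(xₗ) be a separable function where each gₗ is a real polynomial of degree at most 3. Then the two-point estimate of the mean, Σ_{l=1}^{m} Σ_{k=1}^{2} w_{l,k} · Z(μ₁, …, μ_{l−1}, P_{l,k}, μ_{l+1}, …, μ_m), equals the exact expectation E[Z(X₁,…,X_m)] = Σₗ E[gₗ(Xₗ)].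 -/
open MeasureTheory Polynomial

/-! For each variable, Hong's weights form a two-point measure of mass `1/m` whose normalised
moments of orders 1, 2, 3 are `0, 1, λₗ`, matching those of `(Xₗ - μₗ)/σₗ`. Expanding a cubic `gₗ`
in powers of `x - μₗ` shows that `Σₖ wₗₖ gₗ(Pₗₖ)` misses `E[gₗ(Xₗ)]` only in the constant term,
by `(1/m - 1) gₗ(μₗ)`. Since `Z` is separable, at the `(l,k)`-th point the other summands
contribute `Σ_{j≠l} gⱼ(μⱼ)` with total weight `1/m`, and these contributions cancel the defects. -/

theorem Fintype.sum_apply_update {ι α M : Type*} [Fintype ι] [DecidableEq ι] [AddCommGroup M]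
    (f : ι → α → M) (x : ι → α) (i : ι) (y : α) :
    ∑ j, f j (Function.update x i y j) = ∑ j, f j (x j) + (f i y - f i (x i)) := by
  simp only [Function.apply_update f, Finset.sum_update_of_mem (Finset.mem_univ i),
    ← Finset.add_sum_erase _ _ (Finset.mem_univ i), Finset.sdiff_singleton_eq_erase]
  abel

namespace Polynomial

variable {R : Type*} [CommRing R]

theorem eval_eq_sum_range_taylor_coeff {p : R[X]} {n : ℕ} (hp : p.natDegree ≤ n) (a x : R) :
    p.eval x = ∑ j ∈ Finset.range (n + 1), (taylor a p).coeff j * (x - a) ^ j := by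
  rw [← taylor_eval_sub a]
  exact eval_eq_sum_range' (by rwa [natDegree_taylor, Nat.lt_succ_iff]) _

theorem sum_mul_eval_add_mul_eq {ι : Type*} [Fintype ι] {p : R[X]} {n : ℕ} (hp : p.natDegree ≤ n)
    (w ξ : ι → R) (a s : R) :
    ∑ k, w k * p.eval (a + ξ k * s) =
      ∑ j ∈ Finset.range (n + 1), (taylor a p).coeff j * (s ^ j * ∑ k, w k * ξ k ^ j) := by
  simp only [eval_eq_sum_range_taylor_coeff hp a, add_sub_cancel_left, Finset.mul_sum]
  rw [Finset.sum_comm]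
  exact Finset.sum_congr rfl fun j _ => Finset.sum_congr rfl fun k _ => by ring

end Polynomial

section Moments

variable {Ω : Type*} [MeasurableSpace Ω] {P : Measure Ω} {X : Ω → ℝ}

theorem integrable_sub_pow {n : ℕ} (hX : ∀ j ≤ n, Integrable (fun ω => X ω ^ j) P) (c : ℝ)
    {j : ℕ} (hj : j ≤ n) : Integrable (fun ω => (X ω - c) ^ j) P := by
  simp only [sub_eq_add_neg, add_pow]
  exact integrable_finsetSum _ fun i hi =>
    ((hX i ((Nat.lt_succ_iff.1 (Finset.mem_range.1 hi)).trans hj)).mul_const _).mul_const _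

variable {p : ℝ[X]} {n : ℕ} {a : ℝ}

theorem integrable_eval_of_natDegree_le (hp : p.natDegree ≤ n)
    (hX : ∀ j ≤ n, Integrable (fun ω => (X ω - a) ^ j) P) :
    Integrable (fun ω => p.eval (X ω)) P := by
  simp only [eval_eq_sum_range_taylor_coeff hp a]
  exact integrable_finsetSum _ fun j hj =>
    (hX j (Nat.lt_succ_iff.1 (Finset.mem_range.1 hj))).const_mul _

theorem integral_eval_eq_sum_taylor_coeff_mul (hp : p.natDegree ≤ n)
    (hX : ∀ j ≤ n, Integrable (fun ω => (X ω - a) ^ j) P) :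
    ∫ ω, p.eval (X ω) ∂P =
      ∑ j ∈ Finset.range (n + 1), (taylor a p).coeff j * ∫ ω, (X ω - a) ^ j ∂P := by
  simp only [eval_eq_sum_range_taylor_coeff hp a]
  rw [integral_finsetSum _ fun j hj =>
    (hX j (Nat.lt_succ_iff.1 (Finset.mem_range.1 hj))).const_mul _]
  simp only [integral_const_mul]

theorem sum_mul_eval_eq_integral_eval_of_moments [IsProbabilityMeasure P] (hp : p.natDegree ≤ 3)
    {σ lam : ℝ} (hX : ∀ j ≤ 3, Integrable (fun ω => (X ω - a) ^ j) P)
    (h₁ : ∫ ω, X ω - a ∂P = 0) (h₂ : ∫ ω, (X ω - a) ^ 2 ∂P = σ ^ 2)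
    (h₃ : ∫ ω, (X ω - a) ^ 3 ∂P = lam * σ ^ 3)
    {ι : Type*} [Fintype ι] (w ξ : ι → ℝ) (hξ₁ : ∑ k, w k * ξ k = 0)
    (hξ₂ : ∑ k, w k * ξ k ^ 2 = 1) (hξ₃ : ∑ k, w k * ξ k ^ 3 = lam) :
    ∑ k, w k * p.eval (a + ξ k * σ) = ∫ ω, p.eval (X ω) ∂P + (∑ k, w k - 1) * p.eval a := by
  rw [sum_mul_eval_add_mul_eq hp, integral_eval_eq_sum_taylor_coeff_mul hp hX]
  simp only [Finset.sum_range_succ, Finset.range_one, Finset.sum_singleton, taylor_coeff_zero,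
    taylor_coeff_one, pow_zero, pow_one, mul_one, one_mul, mul_zero, add_zero, integral_const,
    probReal_univ, smul_eq_mul, h₁, h₂, h₃, hξ₁, hξ₂, hξ₃]
  ring

end Moments

theorem hong_weights_moments {m lam : ℝ} (hm : 0 < m) {ξ w : Fin 2 → ℝ}
    (hξ₁ : ξ 0 = lam / 2 + Real.sqrt (m + (lam / 2) ^ 2))
    (hξ₂ : ξ 1 = lam / 2 - Real.sqrt (m + (lam / 2) ^ 2))
    (hw₁ : w 0 = -(1 / m) * ξ 1 / (ξ 0 - ξ 1)) (hw₂ : w 1 = (1 / m) * ξ 0 / (ξ 0 - ξ 1)) :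
    ∑ k, w k = 1 / m ∧ ∑ k, w k * ξ k = 0 ∧ ∑ k, w k * ξ k ^ 2 = 1 ∧
      ∑ k, w k * ξ k ^ 3 = lam := by
  set s := Real.sqrt (m + (lam / 2) ^ 2)
  have hs : 0 < s := Real.sqrt_pos.2 (by positivity)
  have hs2 : s ^ 2 = m + (lam / 2) ^ 2 := Real.sq_sqrt (by positivity)
  have hgap : ξ 0 - ξ 1 = 2 * s := by rw [hξ₁, hξ₂]; ring
  simp only [Fin.sum_univ_two, hw₁, hw₂, hgap]
  rw [hξ₁, hξ₂]
  refine ⟨by field_simp; ring, by field_simp; ring, ?_, ?_⟩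
  · field_simp
    linear_combination (16 * s) * hs2
  · field_simp
    linear_combination (32 * lam * s) * hs2

theorem sum_sum_mul_sum_apply_update {ι κ : Type*} [Fintype ι] [DecidableEq ι] [Fintype κ]
    (f : ι → ℝ → ℝ) (x : ι → ℝ) (y w : ι → κ → ℝ) (E : ι → ℝ) {c : ℝ}
    (hc : Fintype.card ι * c = 1) (hw : ∀ i, ∑ k, w i k = c)
    (hE : ∀ i, ∑ k, w i k * f i (y i k) = E i + (c - 1) * f i (x i)) :
    ∑ i, ∑ k, w i k * ∑ j, f j (Function.update x i (y i k) j) = ∑ i, E i := by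
  calc ∑ i, ∑ k, w i k * ∑ j, f j (Function.update x i (y i k) j)
      = ∑ i, (∑ k, w i k * f i (y i k) + (∑ k, w i k) * (∑ j, f j (x j) - f i (x i))) := by
        simp only [Fintype.sum_apply_update, Finset.sum_mul, ← Finset.sum_add_distrib]
        exact Finset.sum_congr rfl fun i _ => Finset.sum_congr rfl fun k _ => by ring
    _ = ∑ i, E i + (Fintype.card ι * c - 1) * ∑ j, f j (x j) := by
        simp only [hE, hw, Finset.sum_add_distrib, Finset.sum_sub_distrib, ← Finset.mul_sum,
          Finset.sum_const, Finset.card_univ, nsmul_eq_mul]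
        ring
    _ = ∑ i, E i := by rw [hc, sub_self, zero_mul, add_zero]

/-- Hong's two-point estimate of the mean of a separable function
`Z(x) = Σₗ gₗ(xₗ)`, where each `gₗ` is a real polynomial of degree at most 3,
equals the exact expectation `E[Z(X₁,…,X_m)] = Σₗ E[gₗ(Xₗ)]`, provided the first
three moments of each `Xₗ` exist and match the scheme's parameters. -/
theorem tpe_mean_exact_for_separable_cubic
    {Ω : Type*} [MeasurableSpace Ω] (P : Measure Ω) [IsProbabilityMeasure P]
    (m : ℕ) (hm : 1 ≤ m) (X : Fin m → Ω → ℝ) (μ σ lam : Fin m → ℝ)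
    (hint : ∀ l, Integrable (X l) P)
    (hint2 : ∀ l, Integrable (fun ω => (X l ω) ^ 2) P)
    (hint3 : ∀ l, Integrable (fun ω => (X l ω) ^ 3) P)
    (hmean : ∀ l, ∫ ω, X l ω ∂P = μ l)
    (hσ : ∀ l, 0 < σ l)
    (hvar : ∀ l, ∫ ω, (X l ω - μ l) ^ 2 ∂P = (σ l) ^ 2)
    (hskew : ∀ l, ∫ ω, ((X l ω - μ l) / σ l) ^ 3 ∂P = lam l)
    (ξ w Pt : Fin m → Fin 2 → ℝ)
    (hξ₁ : ∀ l, ξ l 0 = lam l / 2 + Real.sqrt ((m : ℝ) + (lam l / 2) ^ 2))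
    (hξ₂ : ∀ l, ξ l 1 = lam l / 2 - Real.sqrt ((m : ℝ) + (lam l / 2) ^ 2))
    (hw₁ : ∀ l, w l 0 = -(1 / (m : ℝ)) * ξ l 1 / (ξ l 0 - ξ l 1))
    (hw₂ : ∀ l, w l 1 = (1 / (m : ℝ)) * ξ l 0 / (ξ l 0 - ξ l 1))
    (hPt : ∀ l k, Pt l k = μ l + ξ l k * σ l)
    (g : Fin m → Polynomial ℝ) (hdeg : ∀ l, (g l).natDegree ≤ 3)
    (Z : (Fin m → ℝ) → ℝ)
    (hZ : ∀ x, Z x = ∑ l, (g l).eval (x l)) :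
    (∑ l, ∑ k, w l k * Z (Function.update μ l (Pt l k))) =
        ∫ ω, Z (fun l => X l ω) ∂P ∧
      (∫ ω, Z (fun l => X l ω) ∂P) = ∑ l, ∫ ω, (g l).eval (X l ω) ∂P := by
  have hm₀ : (0 : ℝ) < m := by exact_mod_cast hm
  have hcentered : ∀ l, ∀ j ≤ 3, Integrable (fun ω => (X l ω - μ l) ^ j) P := by
    intro l j hj
    refine integrable_sub_pow (fun i hi => ?_) (μ l) hj
    interval_cases i
    · simp
    · simpa using hint l
    · exact hint2 l
    · exact hint3 l
  have hexact : ∫ ω, Z (fun l => X l ω) ∂P = ∑ l, ∫ ω, (g l).eval (X l ω) ∂P := by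
    simp only [hZ]
    exact integral_finsetSum _ fun l _ => integrable_eval_of_natDegree_le (hdeg l) (hcentered l)
  have hweights := fun l => hong_weights_moments hm₀ (hξ₁ l) (hξ₂ l) (hw₁ l) (hw₂ l)
  have htpe : ∀ l, ∑ k, w l k * (g l).eval (Pt l k) =
      ∫ ω, (g l).eval (X l ω) ∂P + (1 / m - 1) * (g l).eval (μ l) := by
    intro l
    obtain ⟨hw, h₁, h₂, h₃⟩ := hweights l
    have hcentered₁ : ∫ ω, X l ω - μ l ∂P = 0 := by
      simp [integral_sub (hint l) (integrable_const _), hmean l]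
    have hcentered₃ : ∫ ω, (X l ω - μ l) ^ 3 ∂P = lam l * σ l ^ 3 := by
      have hσ₃ : σ l ^ 3 ≠ 0 := (pow_pos (hσ l) 3).ne'
      simp only [← hskew l, div_pow, integral_div, div_mul_cancel₀ _ hσ₃]
    simp only [hPt, ← hw]
    exact sum_mul_eval_eq_integral_eval_of_moments (hdeg l) (hcentered l) hcentered₁ (hvar l)
      hcentered₃ (w l) (ξ l) h₁ h₂ h₃
  refine ⟨?_, hexact⟩
  simp only [hZ] at hexact ⊢
  rw [hexact]
  refine sum_sum_mul_sum_apply_update (fun l x => (g l).eval x) μ Pt w _ ?_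
    (fun l => (hweights l).1) htpe
  rw [Fintype.card_fin, mul_one_div_cancel hm₀.ne']
end

section
/- Let λ be a real number and m = 1, so that Hong's two-point scheme has ξ₁ = λ/2 + √(1 + (λ/2)²), ξ₂ = λ/2 − √(1 + (λ/2)²), w₁ = −ξ₂/(ξ₁ − ξ₂), w₂ = ξ₁/(ξ₁ − ξ₂). Let X be a real random variable with E[X] = μ, E[(X − μ)²] = σ² (σ > 0), E[((X − μ)/σ)³] = λ, and X³ integrable. Then for every real polynomial g of degree at most 3, the two-point quadrature is exact: w₁·g(μ + ξ₁σ) + w₂·g(μ + ξ₂σ) = E[g(X)]. -/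
/-!
Standardize `Y = (X - μ) / σ` and write `g (μ + σ y) = h y` with `h` cubic. Both sides of the
claimed identity are then the same linear combination of the coefficients of `h`, weighted by the
moments of order `0, …, 3` of the two-point law and of `Y` respectively, and these moments agree:
they are `1, 0, 1, λ`. For the two-point law this comes from `ξ₁ + ξ₂ = λ` and `ξ₁ ξ₂ = -1`, i.e.
the nodes are the roots of `ξ² - λ ξ - 1`.
-/

open MeasureTheory Polynomial

section Moments

variable {Ω : Type*} [MeasurableSpace Ω] {P : Measure Ω} {Y : Ω → ℝ} {n : ℕ} {μ σ : ℝ}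

theorem Polynomial.integrable_eval_of_integrable_pow
    (hY : ∀ k ≤ n, Integrable (fun ω => Y ω ^ k) P) {p : ℝ[X]} (hp : p.natDegree ≤ n) :
    Integrable (fun ω => p.eval (Y ω)) P := by
  simp_rw [eval_eq_sum_range' (Nat.lt_succ_of_le hp)]
  exact integrable_finsetSum _ fun k hk =>
    (hY k (Nat.lt_succ_iff.mp (Finset.mem_range.mp hk))).const_mul _

theorem Polynomial.integral_eval_eq_sum_coeff_mul_integral_pow
    (hY : ∀ k ≤ n, Integrable (fun ω => Y ω ^ k) P) {p : ℝ[X]} (hp : p.natDegree ≤ n) :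
    ∫ ω, p.eval (Y ω) ∂P = ∑ k ∈ Finset.range (n + 1), p.coeff k * ∫ ω, Y ω ^ k ∂P := by
  simp_rw [eval_eq_sum_range' (Nat.lt_succ_of_le hp)]
  rw [integral_finsetSum _ fun k hk =>
    (hY k (Nat.lt_succ_iff.mp (Finset.mem_range.mp hk))).const_mul _]
  simp_rw [integral_const_mul]

theorem integrable_sub_div_pow_of_integrable_pow
    (hY : ∀ k ≤ n, Integrable (fun ω => Y ω ^ k) P) (μ σ : ℝ) :
    ∀ k ≤ n, Integrable (fun ω => ((Y ω - μ) / σ) ^ k) P := by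
  intro k hk
  have hlin : (C σ⁻¹ * (X - C μ)).natDegree ≤ 1 := by compute_degree
  have hdeg : ((C σ⁻¹ * (X - C μ)) ^ k).natDegree ≤ n :=
    (natDegree_pow_le_of_le k hlin).trans (by omega)
  simpa [div_eq_inv_mul] using integrable_eval_of_integrable_pow hY hdeg

theorem integral_sub_div_sq_eq_one (hσ : σ ≠ 0) (hvar : ∫ ω, (Y ω - μ) ^ 2 ∂P = σ ^ 2) :
    ∫ ω, ((Y ω - μ) / σ) ^ 2 ∂P = 1 := by
  simp_rw [div_pow]
  rw [integral_div, hvar, div_self (pow_ne_zero 2 hσ)]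

variable [IsProbabilityMeasure P]

theorem integral_sub_div_eq_zero (hY : Integrable Y P) (hμ : ∫ ω, Y ω ∂P = μ) :
    ∫ ω, (Y ω - μ) / σ ∂P = 0 := by
  rw [integral_div, integral_sub hY (integrable_const μ), hμ, integral_const]
  simp

end Moments

section TwoPoint

variable {n : ℕ} {w₁ w₂ ξ₁ ξ₂ : ℝ}

theorem Polynomial.two_point_eval_eq_sum_coeff_mul {p : ℝ[X]} (hp : p.natDegree ≤ n) :
    w₁ * p.eval ξ₁ + w₂ * p.eval ξ₂ =
      ∑ k ∈ Finset.range (n + 1), p.coeff k * (w₁ * ξ₁ ^ k + w₂ * ξ₂ ^ k) := by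
  rw [eval_eq_sum_range' (Nat.lt_succ_of_le hp), eval_eq_sum_range' (Nat.lt_succ_of_le hp),
    Finset.mul_sum, Finset.mul_sum, ← Finset.sum_add_distrib]
  exact Finset.sum_congr rfl fun k _ => by ring

theorem Polynomial.two_point_eval_eq_integral_eval {Ω : Type*} [MeasurableSpace Ω]
    {P : Measure Ω} {Y : Ω → ℝ} (hY : ∀ k ≤ n, Integrable (fun ω => Y ω ^ k) P)
    (hmom : ∀ k ≤ n, w₁ * ξ₁ ^ k + w₂ * ξ₂ ^ k = ∫ ω, Y ω ^ k ∂P)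
    {p : ℝ[X]} (hp : p.natDegree ≤ n) :
    w₁ * p.eval ξ₁ + w₂ * p.eval ξ₂ = ∫ ω, p.eval (Y ω) ∂P := by
  rw [two_point_eval_eq_sum_coeff_mul hp, integral_eval_eq_sum_coeff_mul_integral_pow hY hp]
  exact Finset.sum_congr rfl fun k hk => by
    rw [hmom k (Nat.lt_succ_iff.mp (Finset.mem_range.mp hk))]

theorem two_point_moments (hne : ξ₁ ≠ ξ₂) (hprod : ξ₁ * ξ₂ = -1)
    (hw₁ : w₁ = -ξ₂ / (ξ₁ - ξ₂)) (hw₂ : w₂ = ξ₁ / (ξ₁ - ξ₂)) :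
    w₁ + w₂ = 1 ∧ w₁ * ξ₁ + w₂ * ξ₂ = 0 ∧ w₁ * ξ₁ ^ 2 + w₂ * ξ₂ ^ 2 = 1 ∧
      w₁ * ξ₁ ^ 3 + w₂ * ξ₂ ^ 3 = ξ₁ + ξ₂ := by
  have hsub : ξ₁ - ξ₂ ≠ 0 := sub_ne_zero.mpr hne
  subst hw₁ hw₂
  refine ⟨?_, ?_, ?_, ?_⟩ <;> field_simp
  · ring
  · ring
  · linear_combination (ξ₂ - ξ₁) * hprod
  · linear_combination (ξ₂ - ξ₁) * (ξ₁ + ξ₂) * hprod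

end TwoPoint

theorem hong_nodes_mul (lam : ℝ) :
    (lam / 2 + √(1 + (lam / 2) ^ 2)) * (lam / 2 - √(1 + (lam / 2) ^ 2)) = -1 := by
  linear_combination -Real.sq_sqrt (by positivity : (0 : ℝ) ≤ 1 + (lam / 2) ^ 2)

theorem hong_nodes_ne (lam : ℝ) :
    lam / 2 + √(1 + (lam / 2) ^ 2) ≠ lam / 2 - √(1 + (lam / 2) ^ 2) := by
  have : 0 < √(1 + (lam / 2) ^ 2) := Real.sqrt_pos.mpr (by positivity)
  linarith

/-- For a single random variable (`m = 1`), Hong's two-point quadrature is exact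
for every real polynomial `g` of degree at most 3:
`w₁·g(μ + ξ₁σ) + w₂·g(μ + ξ₂σ) = E[g(X)]`. -/
theorem tpe_single_variable_cubic_exact
    {Ω : Type*} [MeasurableSpace Ω] (P : Measure Ω) [IsProbabilityMeasure P]
    (X : Ω → ℝ) (μ σ lam : ℝ) (hσ : 0 < σ)
    (hint : Integrable X P)
    (hint2 : Integrable (fun ω => (X ω) ^ 2) P)
    (hint3 : Integrable (fun ω => (X ω) ^ 3) P)
    (hmean : ∫ ω, X ω ∂P = μ)
    (hvar : ∫ ω, (X ω - μ) ^ 2 ∂P = σ ^ 2)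
    (hskew : ∫ ω, ((X ω - μ) / σ) ^ 3 ∂P = lam)
    (ξ₁ ξ₂ w₁ w₂ : ℝ)
    (hξ₁ : ξ₁ = lam / 2 + Real.sqrt (1 + (lam / 2) ^ 2))
    (hξ₂ : ξ₂ = lam / 2 - Real.sqrt (1 + (lam / 2) ^ 2))
    (hw₁ : w₁ = -ξ₂ / (ξ₁ - ξ₂))
    (hw₂ : w₂ = ξ₁ / (ξ₁ - ξ₂)) :
    ∀ g : Polynomial ℝ, g.natDegree ≤ 3 →
      w₁ * g.eval (μ + ξ₁ * σ) + w₂ * g.eval (μ + ξ₂ * σ) =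
        ∫ ω, g.eval (X ω) ∂P := by
  intro g hg
  have hpow : ∀ k ≤ 3, Integrable (fun ω => X ω ^ k) P := by
    intro k hk
    interval_cases k <;> simp [hint, hint2, hint3]
  obtain ⟨m₀, m₁, m₂, m₃⟩ := two_point_moments (hξ₁ ▸ hξ₂ ▸ hong_nodes_ne lam)
    (hξ₁ ▸ hξ₂ ▸ hong_nodes_mul lam) hw₁ hw₂
  have hmom : ∀ k ≤ 3, w₁ * ξ₁ ^ k + w₂ * ξ₂ ^ k = ∫ ω, ((X ω - μ) / σ) ^ k ∂P := by
    intro k hk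
    interval_cases k
    · simpa using m₀
    · simpa [m₁] using (integral_sub_div_eq_zero hint hmean).symm
    · rw [m₂, integral_sub_div_sq_eq_one hσ.ne' hvar]
    · rw [m₃, hskew, hξ₁, hξ₂]
      ring
  have hlin : (C μ + Polynomial.X * C σ).natDegree ≤ 1 := by compute_degree!
  have hdeg : (g.comp (C μ + Polynomial.X * C σ)).natDegree ≤ 3 :=
    natDegree_comp_le.trans (by simpa using Nat.mul_le_mul hg hlin)
  simpa [mul_comm σ, div_mul_cancel₀ _ hσ.ne'] using
    two_point_eval_eq_integral_eval (integrable_sub_div_pow_of_integrable_pow hpow μ σ) hmom hdeg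
end
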